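/- arXiv:1002.0113 — 2 statements merged into one kernel-verified Lean document; each statement's English description precedes it below -/
import Mathlib

section
/- Let R be a commutative ring whose Jacobson radical is zero, and let n ≥ 1. Let A be an Azumaya R-algebra that is free of rank n² as an R-module, and let A' be an R-algebra that is generated by n² elements as an R-module and such that for every maximal ideal m of R the fiber A'⧸mA' is nonzero. Then every R-algebra homomorphism f : A → A' is bijective. (Affine form of Lemma 6.2 of the paper; in the paper's proof one reduces to the case where the base is affine and A is free.) -/
/-!
For an ideal `m` of `R` write `mM` for `m • ⊤`. Surjectivity of `A ⊗[R] Aᵐᵒᵖ → End_R(A)` means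
that every two-sided ideal of `A` containing `x` contains `φ x • 1` for every linear form `φ`.
Applied to `f⁻¹(mA')`, a two-sided ideal not containing `1` when the fibre `A' ⧸ mA'` is nonzero,
and to the coordinate forms of a basis, this gives `f⁻¹(mA') ⊆ mA` for every maximal ideal `m`.
Hence `ker f ⊆ ⋂ₘ mA = J(R) • A = 0`, and the images of the `n²` basis vectors of `A` stay
linearly independent in the `R ⧸ m`-vector space `A' ⧸ mA'`, of dimension at most `n²`. So
`f(A) + mA' = A'` for all `m`, and Nakayama's lemma at every maximal ideal gives `f(A) = A'`.
-/

open TensorProduct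

/-- The natural `R`-linear map `A ⊗[R] Aᵐᵒᵖ → End_R(A)`, `a ⊗ b ↦ (x ↦ a * x * b)`. -/
noncomputable def tensorMulLeftRight (R A : Type*) [CommRing R] [Ring A] [Algebra R A] :
    A ⊗[R] Aᵐᵒᵖ →ₗ[R] Module.End R A :=
  TensorProduct.lift <|
    LinearMap.mk₂ R
      (fun a b => (LinearMap.mulLeft R a) ∘ₗ (LinearMap.mulRight R b.unop))
      (fun a₁ a₂ b => LinearMap.ext fun x => by simp [add_mul])
      (fun c a b => LinearMap.ext fun x => by simp [smul_mul_assoc])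
      (fun a b₁ b₂ => LinearMap.ext fun x => by simp [mul_add])
      (fun c a b => LinearMap.ext fun x => by simp [mul_smul_comm])

/-- An Azumaya algebra over a commutative ring `R`: an `R`-algebra which is a faithful
finitely generated projective `R`-module such that the natural map
`A ⊗[R] Aᵐᵒᵖ → End_R(A)`, `a ⊗ b ↦ (x ↦ a x b)`, is bijective. -/
structure IsAzumaya' (R A : Type*) [CommRing R] [Ring A] [Algebra R A] : Prop where
  faithful : FaithfulSMul R A
  projective : Module.Projective R A
  finite : Module.Finite R A
  bij : Function.Bijective (tensorMulLeftRight R A)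

open Submodule

section Modules

variable {R M N : Type*} [CommRing R] [AddCommGroup M] [Module R M] [AddCommGroup N] [Module R N]

theorem Module.Basis.mem_ideal_smul_top_iff {ι : Type*} (b : Module.Basis ι R M) (I : Ideal R)
    {x : M} : x ∈ I • (⊤ : Submodule R M) ↔ ∀ i, b.repr x i ∈ I := by
  refine ⟨fun hx i => ?_, fun h => ?_⟩
  · have hle : I • (⊤ : Submodule R M) ≤ Submodule.comap (b.coord i) I :=
      smul_le.mpr fun r hr y _ => by simpa using I.mul_mem_right (b.repr y i) hr
    exact hle hx
  · rw [← b.linearCombination_repr x, Finsupp.linearCombination_apply]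
    exact AddSubmonoidClass.finsuppSum_mem _ _ _ fun i _ => smul_mem_smul (h i) trivial

theorem Module.Basis.eq_zero_of_forall_isMaximal_mem_smul_top {ι : Type*}
    (b : Module.Basis ι R M) (hJ : (⊥ : Ideal R).jacobson = ⊥) {x : M}
    (hx : ∀ m : Ideal R, m.IsMaximal → x ∈ m • (⊤ : Submodule R M)) : x = 0 := by
  refine b.ext_elem_iff.mpr fun i => ?_
  have hi : b.repr x i ∈ (⊥ : Ideal R).jacobson :=
    Ideal.mem_sInf.mpr fun m ⟨_, hm⟩ => (b.mem_ideal_smul_top_iff m).mp (hx m hm) i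
  simpa [hJ] using hi

theorem Submodule.mem_smul_top_of_smul_mem_of_notMem {m : Ideal R} (hm : m.IsMaximal) {c : R}
    (hc : c ∉ m) {y : M} (h : c • y ∈ m • (⊤ : Submodule R M)) : y ∈ m • (⊤ : Submodule R M) := by
  obtain ⟨d, i, hi, hdi⟩ := hm.exists_inv hc
  have hy : y = d • (c • y) + i • y := by rw [smul_smul, ← add_smul, hdi, one_smul]
  rw [hy]
  exact add_mem (smul_mem _ d h) (smul_mem_smul hi trivial)

theorem Submodule.eq_top_of_forall_isMaximal_sup_smul_top_eq_top [Module.Finite R M]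
    {N : Submodule R M} (h : ∀ m : Ideal R, m.IsMaximal → N ⊔ m • ⊤ = ⊤) : N = ⊤ := by
  suffices N.colon Set.univ = ⊤ from
    eq_top_iff.mpr fun x _ => (colon_eq_top_iff_subset _).mp this (Set.mem_univ x)
  by_contra hne
  obtain ⟨m, hm, hle⟩ := Ideal.exists_le_maximal _ hne
  obtain ⟨r, hr1, hrN⟩ := exists_sub_one_mem_and_smul_le_of_fg_of_le_sup
    Module.Finite.fg_top le_rfl (h m hm).ge
  have hr : r ∈ m := hle <| mem_colon.mpr fun x _ => hrN (smul_mem_pointwise_smul x r ⊤ trivial)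
  exact hm.ne_top ((Ideal.eq_top_iff_one _).mpr (by simpa using m.sub_mem hr hr1))

theorem linearIndependent_mkQ_smul_top_of_comap_le {ι : Type*} [Fintype ι]
    (b : Module.Basis ι R M) (I : Ideal R) {g : M →ₗ[R] N}
    (hg : (I • ⊤ : Submodule R N).comap g ≤ I • ⊤) :
    LinearIndependent (R ⧸ I) fun i => (I • ⊤ : Submodule R N).mkQ (g (b i)) := by
  rw [Fintype.linearIndependent_iff]
  intro c hc i
  choose r hr using fun i => Ideal.Quotient.mk_surjective (c i)
  have hmem : g (∑ i, r i • b i) ∈ I • (⊤ : Submodule R N) := by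
    rw [← Submodule.Quotient.mk_eq_zero, ← mkQ_apply, ← hc, map_sum, map_sum]
    simp [← hr]
  have hri := (b.mem_ideal_smul_top_iff I).mp (hg hmem) i
  rw [b.repr_sum_self] at hri
  rw [← hr i, Ideal.Quotient.eq_zero_iff_mem]
  exact hri

theorem finrank_quotient_smul_top_le_card {s : Finset N} (hs : span R (s : Set N) = ⊤)
    (m : Ideal R) [m.IsMaximal] :
    Module.finrank (R ⧸ m) (N ⧸ m • (⊤ : Submodule R N)) ≤ s.card := by
  classical
  let := Ideal.Quotient.field m
  set t := s.image (m • ⊤ : Submodule R N).mkQ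
  have hspan : span (R ⧸ m) (t : Set (N ⧸ m • (⊤ : Submodule R N))) = ⊤ := by
    rw [← restrictScalars_eq_top_iff R, restrictScalars_span R _ Ideal.Quotient.mk_surjective,
      Finset.coe_image, span_image, hs, Submodule.map_top, range_mkQ]
  calc Module.finrank (R ⧸ m) (N ⧸ m • (⊤ : Submodule R N))
      = Set.finrank (R ⧸ m) (t : Set (N ⧸ m • (⊤ : Submodule R N))) := by
        rw [Set.finrank, hspan, finrank_top]
    _ ≤ t.card := finrank_span_finset_le_card t
    _ ≤ s.card := Finset.card_image_le

theorem LinearMap.range_sup_smul_top_eq_top_of_comap_le {ι : Type*} [Fintype ι]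
    (b : Module.Basis ι R M) {s : Finset N} (hs : span R (s : Set N) = ⊤)
    (hcard : s.card ≤ Fintype.card ι) (m : Ideal R) [m.IsMaximal] {g : M →ₗ[R] N} (hg : (m • ⊤ : Submodule R N).comap g ≤ m • ⊤) :
    LinearMap.range g ⊔ m • ⊤ = ⊤ := by
  let := Ideal.Quotient.field m
  have : Module.Finite R N := ⟨⟨s, hs⟩⟩
  have hli := linearIndependent_mkQ_smul_top_of_comap_le b m hg
  have hspan : span (R ⧸ m) (Set.range fun i => (m • ⊤ : Submodule R N).mkQ (g (b i))) = ⊤ :=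
    eq_top_of_finrank_eq <| (finrank_span_eq_card hli).trans <|
      hli.fintype_card_le_finrank.antisymm ((finrank_quotient_smul_top_le_card hs m).trans hcard)
  rw [← restrictScalars_eq_top_iff R,
    restrictScalars_span R _ Ideal.Quotient.mk_surjective] at hspan
  rw [sup_comm, ← map_mkQ_eq_top, eq_top_iff, ← hspan, span_le]
  rintro _ ⟨i, rfl⟩
  exact mem_map_of_mem (LinearMap.mem_range_self g (b i))

end Modules

section Algebras

variable {R A B : Type*} [CommRing R] [Ring A] [Algebra R A] [Ring B] [Algebra R B]

theorem tensorMulLeftRight_tmul_apply (a : A) (c : Aᵐᵒᵖ) (x : A) :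
    tensorMulLeftRight R A (a ⊗ₜ[R] c) x = a * x * c.unop := by
  simp [tensorMulLeftRight, mul_assoc]

variable (A) in
def Ideal.smulTopTwoSided (I : Ideal R) : TwoSidedIdeal A :=
  .mk' (I • ⊤ : Submodule R A) (zero_mem _) add_mem neg_mem
    (fun {u _} hw => smul_top_le_comap_smul_top I (LinearMap.mulLeft R u) hw)
    (fun {_ u} hw => smul_top_le_comap_smul_top I (LinearMap.mulRight R u) hw)

theorem Ideal.mem_smulTopTwoSided {I : Ideal R} {x : A} :
    x ∈ I.smulTopTwoSided A ↔ x ∈ (I • ⊤ : Submodule R A) :=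
  TwoSidedIdeal.mem_mk' ..

theorem smul_one_mem_of_surjective_tensorMulLeftRight
    (hsurj : Function.Surjective (tensorMulLeftRight R A)) {I : TwoSidedIdeal A} {x : A}
    (hx : x ∈ I) (φ : Module.Dual R A) : φ x • (1 : A) ∈ I := by
  have hmem (t : A ⊗[R] Aᵐᵒᵖ) : tensorMulLeftRight R A t x ∈ I := by
    induction t using TensorProduct.induction_on with
    | zero => simp [I.zero_mem]
    | tmul a c =>
      rw [tensorMulLeftRight_tmul_apply]
      exact I.mul_mem_right _ _ (I.mul_mem_left _ _ hx)
    | add u v hu hv => simpa using I.add_mem hu hv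
  obtain ⟨t, ht⟩ := hsurj (φ.smulRight 1)
  simpa [ht] using hmem t

theorem AlgHom.comap_smul_top_le_of_surjective_tensorMulLeftRight {ι : Type*}
    (b : Module.Basis ι R A) (hsurj : Function.Surjective (tensorMulLeftRight R A))
    {m : Ideal R} (hm : m.IsMaximal) (hfib : Nontrivial (B ⧸ (m • ⊤ : Submodule R B)))
    (f : A →ₐ[R] B) : (m • ⊤ : Submodule R B).comap f.toLinearMap ≤ m • ⊤ := by
  intro x hx
  rw [b.mem_ideal_smul_top_iff]
  by_contra! ⟨i, hi⟩
  have hc : b.repr x i • (1 : B) ∈ (m • ⊤ : Submodule R B) := by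
    have := smul_one_mem_of_surjective_tensorMulLeftRight hsurj
      ((TwoSidedIdeal.mem_comap f).mpr (Ideal.mem_smulTopTwoSided.mpr hx)) (b.coord i)
    simpa [TwoSidedIdeal.mem_comap, Ideal.mem_smulTopTwoSided] using this
  have h1 : (1 : B) ∈ m.smulTopTwoSided B :=
    Ideal.mem_smulTopTwoSided.mpr (mem_smul_top_of_smul_mem_of_notMem hm hi hc)
  refine Submodule.Quotient.nontrivial_iff.mp hfib (eq_top_iff.mpr fun z _ => ?_)
  simpa [Ideal.mem_smulTopTwoSided] using (m.smulTopTwoSided B).mul_mem_left z 1 h1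

end Algebras

theorem algHom_bijective_of_isAzumaya_general
    {R A A' : Type*} [CommRing R]
    [Ring A] [Algebra R A] [Ring A'] [Algebra R A']
    (hJ : (⊥ : Ideal R).jacobson = ⊥)
    (n : ℕ)
    (hAz : IsAzumaya' R A)
    (hfree : Nonempty (Module.Basis (Fin (n ^ 2)) R A))
    (hgen : ∃ s : Finset A', s.card = n ^ 2 ∧ Submodule.span R (s : Set A') = ⊤)
    (hfib : ∀ (m : Ideal R), m.IsMaximal →
      Nontrivial (A' ⧸ (m • ⊤ : Submodule R A')))
    (f : A →ₐ[R] A') :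
    Function.Bijective f := by
  obtain ⟨b⟩ := hfree
  obtain ⟨s, hcard, hspan⟩ := hgen
  have : Module.Finite R A' := ⟨⟨s, hspan⟩⟩
  have hcomap (m : Ideal R) (hm : m.IsMaximal) :
      (m • ⊤ : Submodule R A').comap f.toLinearMap ≤ m • ⊤ :=
    f.comap_smul_top_le_of_surjective_tensorMulLeftRight b hAz.bij.surjective hm (hfib m hm)
  refine ⟨(injective_iff_map_eq_zero f).mpr fun x hx => ?_, fun y => ?_⟩
  · exact b.eq_zero_of_forall_isMaximal_mem_smul_top hJ fun m hm =>
      hcomap m hm (by simp [hx])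
  · have hrange := eq_top_of_forall_isMaximal_sup_smul_top_eq_top fun m _ =>
      LinearMap.range_sup_smul_top_eq_top_of_comap_le b hspan (by simp [hcard]) m (hcomap m ‹_›)
    exact LinearMap.range_eq_top.mp hrange y

/-- Affine form of Lemma 6.2 of the paper: over a commutative ring `R` with vanishing
Jacobson radical, any `R`-algebra homomorphism from an Azumaya algebra `A` free of rank `n²`
to an algebra `A'` generated by `n²` elements as an `R`-module all of whose fibers at
maximal ideals are nonzero is bijective. -/
theorem algHom_bijective_of_isAzumaya
    {R A A' : Type*} [CommRing R]
    [Ring A] [Algebra R A] [Ring A'] [Algebra R A']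
    (hJ : (⊥ : Ideal R).jacobson = ⊥)
    (n : ℕ) (hn : 1 ≤ n)
    (hAz : IsAzumaya' R A)
    (hfree : Nonempty (Module.Basis (Fin (n ^ 2)) R A))
    (hgen : ∃ s : Finset A', s.card = n ^ 2 ∧ Submodule.span R (s : Set A') = ⊤)
    (hfib : ∀ (m : Ideal R), m.IsMaximal →
      Nontrivial (A' ⧸ (m • ⊤ : Submodule R A')))
    (f : A →ₐ[R] A') :
    Function.Bijective f :=
  algHom_bijective_of_isAzumaya_general hJ n hAz hfree hgen hfib f
end

section
/- Let R be a commutative ring whose Jacobson radical is zero. Let M be a free R-module, N an R-module, and F : M → N an R-linear map such that for every maximal ideal m of R the induced map M⧸mM → N⧸mN is injective. Then F is injective. (Injectivity step in the proof of Lemma 6.2: Ker F is contained in mM for every maximal ideal m, and for a free module the intersection of the submodules mM over all maximal ideals m is zero when the Jacobson radical of R is zero.) -/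
theorem Submodule.comap_le_of_injective_mapQ {R M N : Type*} [Ring R]
    [AddCommGroup M] [Module R M] [AddCommGroup N] [Module R N]
    (p : Submodule R M) (q : Submodule R N) (f : M →ₗ[R] N) (h : p ≤ q.comap f)
    (hinj : Function.Injective (p.mapQ q f h)) : q.comap f ≤ p := by
  intro x hx
  rw [← Submodule.Quotient.mk_eq_zero p]
  apply hinj
  rwa [Submodule.mapQ_apply, map_zero, Submodule.Quotient.mk_eq_zero]

theorem LinearMap.apply_mem_of_mem_smul_top {R M : Type*} [CommRing R]
    [AddCommGroup M] [Module R M] (f : M →ₗ[R] R) {I : Ideal R} {x : M}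
    (hx : x ∈ I • (⊤ : Submodule R M)) : f x ∈ I := by
  suffices I • (⊤ : Submodule R M) ≤ Submodule.comap f I from this hx
  refine Submodule.smul_le.mpr fun r hr y _ => ?_
  simpa only [Submodule.mem_comap, map_smul, smul_eq_mul] using I.mul_mem_right (f y) hr

theorem Module.Free.eq_zero_of_forall_mem_maximal_smul_top {R M : Type*} [CommRing R]
    [AddCommGroup M] [Module R M] [Module.Free R M] (hJ : (⊥ : Ideal R).jacobson = ⊥)
    {x : M} (hx : ∀ m : Ideal R, m.IsMaximal → x ∈ m • (⊤ : Submodule R M)) : x = 0 := by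
  let b := Module.Free.chooseBasis R M
  refine b.forall_coord_eq_zero_iff.mp fun i => ?_
  have hcoord : b.coord i x ∈ (⊥ : Ideal R).jacobson :=
    Ideal.mem_sInf.mpr fun {m} hm => (b.coord i).apply_mem_of_mem_smul_top (hx m hm.2)
  rwa [hJ, Ideal.mem_bot] at hcoord

/-- The injectivity step in the proof of Lemma 6.2 of the paper: over a commutative ring `R`
with vanishing Jacobson radical, a linear map `F : M → N` from a free module which is
injective on the fibers `M⧸mM → N⧸mN` at every maximal ideal `m` is itself injective. -/
theorem injective_of_injective_fibers
    {R M N : Type*} [CommRing R]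
    [AddCommGroup M] [Module R M] [Module.Free R M]
    [AddCommGroup N] [Module R N]
    (hJ : (⊥ : Ideal R).jacobson = ⊥)
    (F : M →ₗ[R] N)
    (hfib : ∀ (m : Ideal R), m.IsMaximal →
      Function.Injective
        (Submodule.mapQ (m • ⊤ : Submodule R M) (m • ⊤ : Submodule R N) F
          (by rw [← Submodule.map_le_iff_le_comap, Submodule.map_smul'']
              exact Submodule.smul_mono le_rfl le_top))) :
    Function.Injective F := by
  rw [injective_iff_map_eq_zero]
  intro x hx
  refine Module.Free.eq_zero_of_forall_mem_maximal_smul_top hJ fun m hm => ?_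
  have hxq : F x ∈ (m • ⊤ : Submodule R N) := hx ▸ Submodule.zero_mem _
  exact Submodule.comap_le_of_injective_mapQ _ _ F _ (hfib m hm) hxq
end
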